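/- For every α ≥ 1 there exists an instance on two tasks such that any aggregation rule minimizing a distance to the profile returns a schedule whose total tardiness exceeds α times the minimum total tardiness. Concretely, with tasks a, b where p_a = 1, p_b = k, v ≥ 3 odd voters, ⌊(v-1)/2⌋ preferring A = (a,b) and ⌈(v+1)/2⌉ preferring B = (b,a): the distance-minimizing rule returns B, the total tardiness of A is ⌈(v+1)/2⌉ and that of B is ⌊(v-1)/2⌋·k, so the ratio tends to infinity as k grows. -/

import Mathlib

/-!
Two tasks admit only the schedules `A = (a, b)` and `B = (b, a)`. A distance vanishes exactly on
the diagonal and is symmetric, so the profile's total distance is `m · d(A, B)` from `B` and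
`(v - m) · d(A, B)` from `A`, where `m = ⌊(v-1)/2⌋ < v - m` voters prefer `A`: the strict
majority schedule `B` is the only minimizer. Against a voter preferring the other schedule,
`A` is late by `p_a = 1` (task `b` finishes `p_a` later) and `B` by `p_b = k` (task `a` finishes
`p_b` later), so `T(A) = v - m` while `T(B) = m · k`, which beats `α · T(A)` once `k > α (v - m)`.
-/

/-- Completion time of task `i` in schedule `S`. -/
noncomputable def Ctime {n : ℕ} (p : Fin n → ℝ) (S : Equiv.Perm (Fin n)) (i : Fin n) : ℝ :=
  ∑ j ∈ Finset.univ.filter (fun j => S j ≤ S i), p j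

/-- Total tardiness of schedule `S` w.r.t. profile `P`. -/
noncomputable def Tard {n v : ℕ} (p : Fin n → ℝ) (P : Fin v → Equiv.Perm (Fin n))
    (S : Equiv.Perm (Fin n)) : ℝ :=
  ∑ k, ∑ i, max 0 (Ctime p S i - Ctime p (P k) i)

theorem Fin.sum_ite_val_lt {M : Type*} [AddCommMonoid M] {v m : ℕ} (hm : m ≤ v) (x y : M) :
    ∑ k : Fin v, (if (k : ℕ) < m then x else y) = m • x + (v - m) • y := by
  rw [Finset.sum_ite, Finset.sum_const, Finset.sum_const, Finset.filter_not,
    Finset.card_sdiff_of_subset (Finset.filter_subset _ _), Fin.card_filter_val_lt,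
    Finset.card_univ, Fintype.card_fin, min_eq_right hm]

theorem eq_of_weighted_dist_le {X : Type*} {d : X → X → ℝ} (hnonneg : ∀ x y, 0 ≤ d x y)
    (hzero : ∀ x y, d x y = 0 ↔ x = y) (hsymm : ∀ x y, d x y = d y x) {m n : ℝ} (hmn : m < n)
    {a b : X} (h : m * d a a + n * d a b ≤ m * d b a + n * d b b) : a = b := by
  rw [(hzero a a).2 rfl, (hzero b b).2 rfl, hsymm b a] at h
  have hab : d a b ≤ 0 := by nlinarith [hnonneg a b]
  exact (hzero a b).1 (le_antisymm hab (hnonneg a b))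

theorem Fin.perm_two_eq_one_or_swap (S : Equiv.Perm (Fin 2)) : S = 1 ∨ S = Equiv.swap 0 1 := by
  revert S; decide

section Tardiness

variable {n : ℕ} (p : Fin n → ℝ)

noncomputable def tardiness (S V : Equiv.Perm (Fin n)) : ℝ :=
  ∑ i, max 0 (Ctime p S i - Ctime p V i)

theorem Tard_eq_sum_tardiness {v : ℕ} (P : Fin v → Equiv.Perm (Fin n)) (S : Equiv.Perm (Fin n)) :
    Tard p P S = ∑ k, tardiness p S (P k) :=
  rfl

@[simp]
theorem tardiness_self (S : Equiv.Perm (Fin n)) : tardiness p S S = 0 := by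
  simp [tardiness]

end Tardiness

section TwoTasks

variable (p : Fin 2 → ℝ)

theorem Ctime_one_zero : Ctime p 1 0 = p 0 := by
  simp [Ctime, Finset.sum_filter]

theorem Ctime_one_one : Ctime p 1 1 = p 0 + p 1 := by
  simp [Ctime, Finset.sum_filter, Fin.sum_univ_two, Fin.le_def]

theorem Ctime_swap_zero : Ctime p (Equiv.swap 0 1) 0 = p 0 + p 1 := by
  simp [Ctime, Finset.sum_filter, Fin.sum_univ_two]

theorem Ctime_swap_one : Ctime p (Equiv.swap 0 1) 1 = p 1 := by
  simp [Ctime, Finset.sum_filter, Fin.sum_univ_two]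

variable {p}

theorem tardiness_one_swap (h0 : 0 ≤ p 0) (h1 : 0 ≤ p 1) :
    tardiness p 1 (Equiv.swap 0 1) = p 0 := by
  rw [tardiness, Fin.sum_univ_two, Ctime_one_zero, Ctime_one_one, Ctime_swap_zero,
    Ctime_swap_one, max_eq_left (by linarith), max_eq_right (by linarith)]
  ring

theorem tardiness_swap_one (h0 : 0 ≤ p 0) (h1 : 0 ≤ p 1) :
    tardiness p (Equiv.swap 0 1) 1 = p 1 := by
  rw [tardiness, Fin.sum_univ_two, Ctime_one_zero, Ctime_one_one, Ctime_swap_zero,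
    Ctime_swap_one, max_eq_right (by linarith), max_eq_left (by linarith)]
  ring

end TwoTasks

/-- For every `α ≥ 1` there is a two-task instance (p_a = 1, p_b = kk, `v ≥ 3` odd voters,
`⌊(v-1)/2⌋` preferring `A = 1` and `⌈(v+1)/2⌉` preferring `B = swap 0 1`) on which any
rule minimizing a distance to the profile returns `B`, yet
`T(A) = ⌈(v+1)/2⌉`, `T(B) = ⌊(v-1)/2⌋·kk`, and `T(B) > α·T(A)`. -/
theorem stmt6 (α : ℝ) (hα : 1 ≤ α) (v : ℕ) (hv : 3 ≤ v) (hodd : Odd v) :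
    ∃ kk : ℝ, 1 ≤ kk ∧
      ∀ (p : Fin 2 → ℝ), p 0 = 1 → p 1 = kk →
      ∀ (P : Fin v → Equiv.Perm (Fin 2)),
        (∀ k : Fin v, P k = if (k : ℕ) < (v - 1) / 2 then 1 else Equiv.swap 0 1) →
        (∀ d : Equiv.Perm (Fin 2) → Equiv.Perm (Fin 2) → ℝ,
          (∀ S S', 0 ≤ d S S') → (∀ S S', d S S' = 0 ↔ S = S') →
          (∀ S S', d S S' = d S' S) → (∀ S S' z, d S S' ≤ d S z + d z S') →
          ∀ S : Equiv.Perm (Fin 2),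
            (∀ S', ∑ k, d S (P k) ≤ ∑ k, d S' (P k)) → S = Equiv.swap 0 1) ∧
        Tard p P 1 = (((v + 1) / 2 : ℕ) : ℝ) ∧
        Tard p P (Equiv.swap 0 1) = (((v - 1) / 2 : ℕ) : ℝ) * kk ∧
        Tard p P (Equiv.swap 0 1) > α * Tard p P 1 := by
  obtain ⟨t, rfl⟩ := hodd
  simp only [show (2 * t + 1 - 1) / 2 = t by omega, show (2 * t + 1 + 1) / 2 = t + 1 by omega]
  have ht : (1 : ℝ) ≤ t := by exact_mod_cast (by omega : 1 ≤ t)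
  have hkk : (1 : ℝ) ≤ α * (t + 1 : ℕ) + 1 := by push_cast; nlinarith
  refine ⟨α * (t + 1 : ℕ) + 1, hkk, fun p hp0 hp1 P hP => ?_⟩
  have hprofile (f : Equiv.Perm (Fin 2) → ℝ) :
      ∑ k, f (P k) = t * f 1 + (t + 1 : ℕ) * f (Equiv.swap 0 1) := by
    simp only [hP, apply_ite f, Fin.sum_ite_val_lt (by omega : t ≤ 2 * t + 1), nsmul_eq_mul,
      show 2 * t + 1 - t = t + 1 by omega]
  have ha : 0 ≤ p 0 := by rw [hp0]; exact zero_le_one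
  have hb : 0 ≤ p 1 := by rw [hp1]; linarith
  have hA : Tard p P 1 = (t + 1 : ℕ) := by
    rw [Tard_eq_sum_tardiness, hprofile, tardiness_self, tardiness_one_swap ha hb, hp0]
    ring
  have hB : Tard p P (Equiv.swap 0 1) = t * (α * (t + 1 : ℕ) + 1) := by
    rw [Tard_eq_sum_tardiness, hprofile, tardiness_self, tardiness_swap_one ha hb, hp1]
    ring
  refine ⟨fun d hnonneg hzero hsymm _ S hS => ?_, hA, hB, ?_⟩
  · rcases Fin.perm_two_eq_one_or_swap S with rfl | rfl
    · have h := hS (Equiv.swap 0 1)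
      rw [hprofile, hprofile] at h
      exact absurd (eq_of_weighted_dist_le hnonneg hzero hsymm (by push_cast; linarith) h)
        (by decide)
    · rfl
  · rw [hA, hB]
    nlinarith
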